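/- Let F be a compactly supported probability measure on ℝ, m(y) = ∫ φ(y-θ) dF(θ), and define the posterior mean δ(y) = y + m'(y)/m(y). Then δ'(y) = Var(μ | Y=y) ≥ 0, i.e., δ is nondecreasing; equivalently, c(y) = y²/2 + log m(y) is convex. -/

import Mathlib

/-!
Write `M_k(y) = ∫ θ ^ k φ(y - θ) dF(θ)`, so that `m = M_0`. Since `φ'(x) = -x φ(x)` and `F`
has compact support, differentiating under the integral gives `M_k' = M_{k+1} - y M_k`. Hence
`δ = y + M_0' / M_0 = M_1 / M_0` (Tweedie's formula) and `δ' = M_2 / M_0 - (M_1 / M_0) ^ 2`,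
which is nonnegative because `M_1 ^ 2 ≤ M_0 M_2`: the quadratic
`t ↦ ∫ (θ - t) ^ 2 φ(y - θ) dF(θ)` is nonnegative, so its discriminant is not positive.
Finally `(y ^ 2 / 2 + log m)' = δ` is nondecreasing, so this function is convex.
-/

open MeasureTheory Real

/-- Standard normal density. -/
noncomputable def stdNormalPDF (x : ℝ) : ℝ := (Real.sqrt (2 * π))⁻¹ * Real.exp (-x ^ 2 / 2)

section CompactlySupported

variable {α : Type*} [TopologicalSpace α] [MeasurableSpace α] [OpensMeasurableSpace α]
  {μ : Measure α} [IsFiniteMeasure μ] {K : Set α}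

theorem integrable_of_ae_mem_isCompact (hK : IsCompact K) (hμK : ∀ᵐ θ ∂μ, θ ∈ K)
    {g : α → ℝ} (hg : Continuous g) : Integrable g μ := by
  obtain ⟨C, hC⟩ := hK.exists_bound_of_continuousOn hg.continuousOn
  exact (integrable_const C).mono' hg.aestronglyMeasurable (hμK.mono hC)

theorem hasDerivAt_integral_of_ae_mem_isCompact (hK : IsCompact K) (hμK : ∀ᵐ θ ∂μ, θ ∈ K)
    {f f' : ℝ → α → ℝ} (hf : Continuous fun p : ℝ × α => f p.1 p.2)
    (hf' : Continuous fun p : ℝ × α => f' p.1 p.2)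
    (hderiv : ∀ x θ, HasDerivAt (f · θ) (f' x θ) x) (y : ℝ) :
    HasDerivAt (fun x => ∫ θ, f x θ ∂μ) (∫ θ, f' y θ ∂μ) y := by
  have hcont (x : ℝ) : Continuous (f x) := hf.comp (Continuous.prodMk_right x)
  obtain ⟨C, hC⟩ := ((isCompact_closedBall y 1).prod hK).exists_bound_of_continuousOn
    hf'.continuousOn
  refine (hasDerivAt_integral_of_dominated_loc_of_deriv_le (bound := fun _ => C)
    (Metric.ball_mem_nhds y one_pos) (.of_forall fun x => (hcont x).aestronglyMeasurable)
    (integrable_of_ae_mem_isCompact hK hμK (hcont y))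
    (hf'.comp (Continuous.prodMk_right y)).aestronglyMeasurable ?_ (integrable_const C)
    (.of_forall fun θ x _ => hderiv x θ)).2
  exact hμK.mono fun θ hθ x hx => hC (x, θ) ⟨Metric.ball_subset_closedBall hx, hθ⟩

end CompactlySupported

theorem sq_integral_mul_le_integral_mul_integral {α : Type*} [MeasurableSpace α]
    {μ : Measure α} {w : α → ℝ} (hw : 0 ≤ w) (g : α → ℝ) (h0 : Integrable w μ)
    (h1 : Integrable (fun θ => g θ * w θ) μ) (h2 : Integrable (fun θ => g θ ^ 2 * w θ) μ) :
    (∫ θ, g θ * w θ ∂μ) ^ 2 ≤ (∫ θ, w θ ∂μ) * ∫ θ, g θ ^ 2 * w θ ∂μ := by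
  have hquad : ∀ t : ℝ, 0 ≤ (∫ θ, w θ ∂μ) * (t * t) + (-2 * ∫ θ, g θ * w θ ∂μ) * t
      + ∫ θ, g θ ^ 2 * w θ ∂μ := fun t => by
    have hexpand : (fun θ => (g θ - t) ^ 2 * w θ)
        = fun θ => t * t * w θ + -2 * t * (g θ * w θ) + g θ ^ 2 * w θ := by
      ext θ; ring
    have hnonneg : 0 ≤ ∫ θ, (g θ - t) ^ 2 * w θ ∂μ :=
      integral_nonneg fun θ => mul_nonneg (sq_nonneg _) (hw θ)
    have hlin : Integrable (fun θ => t * t * w θ + -2 * t * (g θ * w θ)) μ :=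
      (h0.const_mul _).add (h1.const_mul _)
    rw [hexpand, integral_add hlin h2, integral_add (h0.const_mul _) (h1.const_mul _),
      integral_const_mul, integral_const_mul] at hnonneg
    linarith
  have hdisc := discrim_le_zero hquad
  rw [discrim] at hdisc
  nlinarith

theorem stdNormalPDF_pos (x : ℝ) : 0 < stdNormalPDF x := by
  unfold stdNormalPDF
  positivity

@[fun_prop]
theorem continuous_stdNormalPDF : Continuous stdNormalPDF := by
  unfold stdNormalPDF
  fun_prop

theorem hasDerivAt_stdNormalPDF (x : ℝ) : HasDerivAt stdNormalPDF (-x * stdNormalPDF x) x := by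
  have hexp : HasDerivAt (fun x : ℝ => -x ^ 2 / 2) (-x) x := by
    refine (((hasDerivAt_pow 2 x).neg).div_const 2).congr_deriv ?_
    ring
  refine ((hexp.exp).const_mul (√(2 * π))⁻¹).congr_deriv ?_
  unfold stdNormalPDF
  ring

/-- `unnormalizedMoment F k y / unnormalizedMoment F 0 y` is the posterior moment
`E[μ ^ k | Y = y]` for `μ ∼ F`, `Y | μ ∼ N(μ, 1)`. -/
noncomputable def unnormalizedMoment (F : Measure ℝ) (k : ℕ) (y : ℝ) : ℝ :=
  ∫ θ, θ ^ k * stdNormalPDF (y - θ) ∂F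

section UnnormalizedMoment

variable {F : Measure ℝ} [IsFiniteMeasure F] {K : Set ℝ}

theorem integrable_pow_mul_stdNormalPDF (hK : IsCompact K) (hFK : ∀ᵐ θ ∂F, θ ∈ K)
    (k : ℕ) (y : ℝ) :
    Integrable (fun θ => θ ^ k * stdNormalPDF (y - θ)) F :=
  integrable_of_ae_mem_isCompact hK hFK (by fun_prop)

theorem hasDerivAt_unnormalizedMoment (hK : IsCompact K) (hFK : ∀ᵐ θ ∂F, θ ∈ K)
    (k : ℕ) (y : ℝ) :
    HasDerivAt (unnormalizedMoment F k)
      (unnormalizedMoment F (k + 1) y - y * unnormalizedMoment F k y) y := by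
  have hderiv : ∀ x θ : ℝ, HasDerivAt (fun x => θ ^ k * stdNormalPDF (x - θ))
      (θ ^ (k + 1) * stdNormalPDF (x - θ) - x * (θ ^ k * stdNormalPDF (x - θ))) x := by
    intro x θ
    refine (((hasDerivAt_stdNormalPDF (x - θ)).comp x
      ((hasDerivAt_id x).sub_const θ)).const_mul (θ ^ k)).congr_deriv ?_
    ring
  have hint := hasDerivAt_integral_of_ae_mem_isCompact hK hFK (by fun_prop) (by fun_prop) hderiv y
  rwa [integral_sub (integrable_pow_mul_stdNormalPDF hK hFK _ y)
    ((integrable_pow_mul_stdNormalPDF hK hFK k y).const_mul y), integral_const_mul] at hint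

theorem unnormalizedMoment_zero_pos [NeZero F] (hK : IsCompact K) (hFK : ∀ᵐ θ ∂F, θ ∈ K)
    (y : ℝ) : 0 < unnormalizedMoment F 0 y := by
  have hint := integrable_pow_mul_stdNormalPDF hK hFK 0 y
  rw [unnormalizedMoment, integral_pos_iff_support_of_nonneg
    (fun θ => by simpa using (stdNormalPDF_pos _).le) hint]
  simp [Function.support, (stdNormalPDF_pos _).ne', NeZero.ne F]

theorem sq_unnormalizedMoment_one_le (hK : IsCompact K) (hFK : ∀ᵐ θ ∂F, θ ∈ K) (y : ℝ) :
    unnormalizedMoment F 1 y ^ 2 ≤ unnormalizedMoment F 0 y * unnormalizedMoment F 2 y := by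
  have h0 := integrable_pow_mul_stdNormalPDF hK hFK 0 y
  have h1 := integrable_pow_mul_stdNormalPDF hK hFK 1 y
  simp only [pow_zero, one_mul, pow_one] at h0 h1
  simpa [unnormalizedMoment] using sq_integral_mul_le_integral_mul_integral
    (fun θ => (stdNormalPDF_pos (y - θ)).le) id h0 h1
    (integrable_pow_mul_stdNormalPDF hK hFK 2 y)

end UnnormalizedMoment

noncomputable def posteriorMean (F : Measure ℝ) (y : ℝ) : ℝ :=
  unnormalizedMoment F 1 y / unnormalizedMoment F 0 y

noncomputable def posteriorVariance (F : Measure ℝ) (y : ℝ) : ℝ :=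
  unnormalizedMoment F 2 y / unnormalizedMoment F 0 y - posteriorMean F y ^ 2

section Posterior

variable {F : Measure ℝ} [IsFiniteMeasure F] [NeZero F] {K : Set ℝ}

theorem tweedie_formula (hK : IsCompact K) (hFK : ∀ᵐ θ ∂F, θ ∈ K) (y : ℝ) :
    y + deriv (unnormalizedMoment F 0) y / unnormalizedMoment F 0 y = posteriorMean F y := by
  rw [(hasDerivAt_unnormalizedMoment hK hFK 0 y).deriv, posteriorMean]
  field_simp [(unnormalizedMoment_zero_pos hK hFK y).ne']
  ring

theorem hasDerivAt_posteriorMean (hK : IsCompact K) (hFK : ∀ᵐ θ ∂F, θ ∈ K) (y : ℝ) :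
    HasDerivAt (posteriorMean F) (posteriorVariance F y) y := by
  have hpos := (unnormalizedMoment_zero_pos hK hFK y).ne'
  refine ((hasDerivAt_unnormalizedMoment hK hFK 1 y).div
    (hasDerivAt_unnormalizedMoment hK hFK 0 y) hpos).congr_deriv ?_
  rw [posteriorVariance, posteriorMean]
  field_simp
  ring

theorem deriv_posteriorMean (hK : IsCompact K) (hFK : ∀ᵐ θ ∂F, θ ∈ K) :
    deriv (posteriorMean F) = posteriorVariance F :=
  funext fun y => (hasDerivAt_posteriorMean hK hFK y).deriv

theorem posteriorVariance_nonneg (hK : IsCompact K) (hFK : ∀ᵐ θ ∂F, θ ∈ K) (y : ℝ) :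
    0 ≤ posteriorVariance F y := by
  have hpos := unnormalizedMoment_zero_pos hK hFK y
  rw [posteriorVariance, posteriorMean, div_pow, sub_nonneg,
    div_le_div_iff₀ (pow_pos hpos 2) hpos]
  nlinarith [sq_unnormalizedMoment_one_le hK hFK y]

theorem monotone_posteriorMean (hK : IsCompact K) (hFK : ∀ᵐ θ ∂F, θ ∈ K) :
    Monotone (posteriorMean F) :=
  monotone_of_deriv_nonneg (fun y => (hasDerivAt_posteriorMean hK hFK y).differentiableAt)
    (deriv_posteriorMean hK hFK ▸ posteriorVariance_nonneg hK hFK)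

theorem convexOn_half_sq_add_log_unnormalizedMoment (hK : IsCompact K)
    (hFK : ∀ᵐ θ ∂F, θ ∈ K) :
    ConvexOn ℝ Set.univ fun y => y ^ 2 / 2 + Real.log (unnormalizedMoment F 0 y) := by
  have hc (y : ℝ) : HasDerivAt (fun y => y ^ 2 / 2 + Real.log (unnormalizedMoment F 0 y))
      (posteriorMean F y) y := by
    have hM := hasDerivAt_unnormalizedMoment hK hFK 0 y
    rw [← tweedie_formula hK hFK, hM.deriv]
    refine (((hasDerivAt_pow 2 y).div_const 2).add
      (hM.log (unnormalizedMoment_zero_pos hK hFK y).ne')).congr_deriv ?_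
    ring
  refine Monotone.convexOn_univ_of_deriv (fun y => (hc y).differentiableAt) ?_
  exact (funext fun y => (hc y).deriv) ▸ monotone_posteriorMean hK hFK

end Posterior

/-- The Tweedie posterior-mean rule `δ(y) = y + m'(y)/m(y)` has derivative equal to the
posterior variance (hence nonnegative), `δ` is nondecreasing, and
`c(y) = y²/2 + log m(y)` is convex. -/
theorem tweedie_monotone_convex (F : Measure ℝ) [IsProbabilityMeasure F]
    (B : ℝ) (hsupp : F (Set.Icc (-B) B)ᶜ = 0)
    (m δ : ℝ → ℝ)
    (hm : ∀ y, m y = ∫ θ, stdNormalPDF (y - θ) ∂F)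
    (hδ : ∀ y, δ y = y + deriv m y / m y) :
    (∀ y, deriv δ y
        = (∫ θ, θ ^ 2 * stdNormalPDF (y - θ) ∂F) / m y
          - ((∫ θ, θ * stdNormalPDF (y - θ) ∂F) / m y) ^ 2) ∧
    (∀ y, 0 ≤ deriv δ y) ∧ Monotone δ ∧
    ConvexOn ℝ Set.univ (fun y => y ^ 2 / 2 + Real.log (m y)) := by
  have hK : IsCompact (Set.Icc (-B) B) := isCompact_Icc
  have hFK : ∀ᵐ θ ∂F, θ ∈ Set.Icc (-B) B := ae_iff.mpr hsupp
  have hm0 : m = unnormalizedMoment F 0 := funext fun y => by simp [hm, unnormalizedMoment]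
  subst hm0
  have hδ_eq : δ = posteriorMean F := funext fun y => by rw [hδ, tweedie_formula hK hFK]
  subst hδ_eq
  refine ⟨fun y => ?_, fun y => deriv_posteriorMean hK hFK ▸ posteriorVariance_nonneg hK hFK y,
    monotone_posteriorMean hK hFK, convexOn_half_sq_add_log_unnormalizedMoment hK hFK⟩
  simp [deriv_posteriorMean hK hFK, posteriorVariance, posteriorMean, unnormalizedMoment]
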